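/- Let U be an open subset of the unit disc 𝔻 = {z ∈ ℂ : Complex.abs z < 1} and let f : ℂ → ℂ be holomorphic on U with f z ≠ 0 for every z ∈ U. Define Ψ : z ↦ -Real.log (Complex.abs (f z) * (1 - (Complex.abs z)^2)). Then for every z ∈ U one has ΔΨ(z) = D²Ψ(z)(1,1) + D²Ψ(z)(I,I) = 4 / (1 - (Complex.abs z)^2)^2; in particular ΔΨ(z) > 0, so Ψ is strictly subharmonic (strictly plurisubharmonic, i.e. strictly convex with respect to the complex structure) on U. -/

import Mathlib

/-! Locally `Ψ = -log (1 - |z|²) - log |f|`. The second term is harmonic, being the real part of a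
holomorphic logarithm of `f`, so `ΔΨ` is the Laplacian of the Poincaré potential
`-log (1 - |z|²)`. For a radial function `φ (|x|²)` on an `n`-dimensional space the Laplacian is
`2n φ'(|x|²) + 4 |x|² φ''(|x|²)`, which for `φ = -log (1 - ·)` and `n = 2` gives
`4/(1 - |z|²) + 4|z|²/(1 - |z|²)² = 4/(1 - |z|²)²`. -/

open Filter Topology ContinuousLinearMap Laplacian InnerProductSpace Module
open scoped RealInnerProductSpace

theorem one_sub_norm_sq_pos {E : Type*} [SeminormedAddGroup E] {x : E} (hx : ‖x‖ < 1) :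
    0 < 1 - ‖x‖ ^ 2 :=
  sub_pos.2 (pow_lt_one₀ (norm_nonneg x) hx two_ne_zero)

section Radial

variable {E : Type*} [NormedAddCommGroup E] [InnerProductSpace ℝ E]

theorem hasFDerivAt_comp_norm_sq {φ φ' : ℝ → ℝ} {x : E}
    (hφ : HasDerivAt φ (φ' (‖x‖ ^ 2)) (‖x‖ ^ 2)) :
    HasFDerivAt (fun y : E => φ (‖y‖ ^ 2)) ((2 * φ' (‖x‖ ^ 2)) • innerSL ℝ x) x := by
  refine (hφ.comp_hasFDerivAt x (hasStrictFDerivAt_norm_sq x).hasFDerivAt).congr_fderiv ?_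
  ext v
  simp only [smul_apply, coe_innerSL_apply, nsmul_eq_mul, Nat.cast_ofNat, smul_eq_mul]
  ring

theorem fderiv_fderiv_comp_norm_sq_apply {φ φ' : ℝ → ℝ} {φ'' : ℝ} {x : E}
    (hφ : ∀ᶠ t in 𝓝 (‖x‖ ^ 2), HasDerivAt φ (φ' t) t) (hφ' : HasDerivAt φ' φ'' (‖x‖ ^ 2))
    (v : E) :
    fderiv ℝ (fderiv ℝ fun y : E => φ (‖y‖ ^ 2)) x v v
      = 2 * φ' (‖x‖ ^ 2) * ‖v‖ ^ 2 + 4 * φ'' * ⟪x, v⟫ ^ 2 := by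
  have hfderiv : fderiv ℝ (fun y : E => φ (‖y‖ ^ 2)) =ᶠ[𝓝 x]
      fun y => (2 * φ' (‖y‖ ^ 2)) • innerSL ℝ y := by
    filter_upwards [(continuous_norm.pow 2).continuousAt.eventually hφ] with y hy
    exact (hasFDerivAt_comp_norm_sq hy).fderiv
  have hcoeff :
      HasFDerivAt (fun y : E => 2 * φ' (‖y‖ ^ 2)) ((2 * φ'') • (2 • innerSL ℝ x)) x := by
    simpa [smul_smul] using
      (hφ'.comp_hasFDerivAt x (hasStrictFDerivAt_norm_sq x).hasFDerivAt).const_mul 2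
  have hsecond : HasFDerivAt (fun y => (2 * φ' (‖y‖ ^ 2)) • innerSL ℝ y) _ x :=
    hcoeff.smul (innerSL ℝ (E := E)).hasFDerivAt
  rw [hfderiv.fderiv_eq, hsecond.fderiv]
  simp only [add_apply, smul_apply, smulRight_apply, smul_eq_mul, nsmul_eq_mul]
  rw [innerSL_apply_apply, innerSL_apply_apply, real_inner_self_eq_norm_sq]
  ring

theorem laplacian_comp_norm_sq [FiniteDimensional ℝ E] {φ φ' : ℝ → ℝ} {φ'' : ℝ} {x : E}
    (hφ : ∀ᶠ t in 𝓝 (‖x‖ ^ 2), HasDerivAt φ (φ' t) t) (hφ' : HasDerivAt φ' φ'' (‖x‖ ^ 2)) :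
    Δ (fun y : E => φ (‖y‖ ^ 2)) x = 2 * finrank ℝ E * φ' (‖x‖ ^ 2) + 4 * ‖x‖ ^ 2 * φ'' := by
  set b := stdOrthonormalBasis ℝ E
  have parseval : ∑ i, ⟪x, b i⟫ ^ 2 = ‖x‖ ^ 2 := by
    rw [← real_inner_self_eq_norm_sq, ← b.sum_inner_mul_inner x x]
    simp [sq, real_inner_comm]
  rw [laplacian_eq_iteratedFDeriv_orthonormalBasis _ b]
  simp only [iteratedFDeriv_two_apply, Matrix.cons_val_zero, Matrix.cons_val_one,
    fderiv_fderiv_comp_norm_sq_apply hφ hφ', b.orthonormal.1, Finset.sum_add_distrib]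
  rw [← Finset.mul_sum, ← Finset.mul_sum, parseval]
  simp only [one_pow, Finset.sum_const, Finset.card_univ, Fintype.card_fin, nsmul_eq_mul, mul_one]
  ring

theorem contDiffAt_neg_log_one_sub_norm_sq {x : E} (hx : ‖x‖ < 1) :
    ContDiffAt ℝ 2 (fun y : E => -Real.log (1 - ‖y‖ ^ 2)) x :=
  ((contDiffAt_const.sub (contDiff_norm_sq ℝ).contDiffAt).log (one_sub_norm_sq_pos hx).ne').neg

end Radial

theorem laplacian_eq_fderiv_fderiv_complexPlane (g : ℂ → ℝ) (z : ℂ) :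
    Δ g z = fderiv ℝ (fderiv ℝ g) z 1 1 + fderiv ℝ (fderiv ℝ g) z Complex.I Complex.I := by
  simp [laplacian_eq_iteratedFDeriv_complexPlane, iteratedFDeriv_two_apply]

theorem laplacian_neg_log_one_sub_norm_sq {z : ℂ} (hz : ‖z‖ < 1) :
    Δ (fun w : ℂ => -Real.log (1 - ‖w‖ ^ 2)) z = 4 / (1 - ‖z‖ ^ 2) ^ 2 := by
  have hpos := one_sub_norm_sq_pos hz
  have hφ : ∀ᶠ t in 𝓝 (‖z‖ ^ 2), HasDerivAt (fun t => -Real.log (1 - t)) (1 - t)⁻¹ t := by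
    filter_upwards [eventually_lt_nhds (sub_pos.1 hpos)] with t ht
    exact (((hasDerivAt_id' t).const_sub 1).log (sub_pos.2 ht).ne').fun_neg.congr_deriv (by ring)
  have hφ' : HasDerivAt (fun t : ℝ => (1 - t)⁻¹) ((1 - ‖z‖ ^ 2) ^ 2)⁻¹ (‖z‖ ^ 2) := by
    simpa using ((hasDerivAt_id (‖z‖ ^ 2)).const_sub 1).fun_inv hpos.ne'
  rw [laplacian_comp_norm_sq hφ hφ', Complex.finrank_real_complex]
  field_simp
  ring

/-- For `f` holomorphic and nonvanishing on an open subset `U` of the unit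
disc, the function `Ψ(z) = -log (|f z| (1 - |z|²))` satisfies
`ΔΨ(z) = 4/(1-|z|²)² > 0` on `U`, i.e. `Ψ` is strictly subharmonic. -/
theorem neg_log_abs_poincare_strictly_subharmonic
    (U : Set ℂ) (hU : IsOpen U) (hUD : U ⊆ {z : ℂ | ‖z‖ < 1})
    (f : ℂ → ℂ) (hf : DifferentiableOn ℂ f U) (hf0 : ∀ z ∈ U, f z ≠ 0) :
    ∀ z ∈ U,
      (fderiv ℝ (fderiv ℝ (fun z =>
          -Real.log (‖f z‖ * (1 - (‖z‖) ^ 2)))) z 1 1 +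
       fderiv ℝ (fderiv ℝ (fun z =>
          -Real.log (‖f z‖ * (1 - (‖z‖) ^ 2)))) z
            Complex.I Complex.I
        = 4 / (1 - (‖z‖) ^ 2) ^ 2) ∧
      0 < fderiv ℝ (fderiv ℝ (fun z =>
          -Real.log (‖f z‖ * (1 - (‖z‖) ^ 2)))) z 1 1 +
          fderiv ℝ (fderiv ℝ (fun z =>
          -Real.log (‖f z‖ * (1 - (‖z‖) ^ 2)))) z
            Complex.I Complex.I := by
  intro z hz
  have hz1 : ‖z‖ < 1 := hUD hz
  have hlog : HarmonicAt (fun w => Real.log ‖f w‖) z :=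
    (hf.analyticAt (hU.mem_nhds hz)).harmonicAt_log_norm (hf0 z hz)
  have hsplit : (fun w => -Real.log (‖f w‖ * (1 - ‖w‖ ^ 2))) =ᶠ[𝓝 z]
      (fun w => -Real.log (1 - ‖w‖ ^ 2)) - fun w => Real.log ‖f w‖ := by
    filter_upwards [hU.mem_nhds hz] with w hw
    rw [Pi.sub_apply,
      Real.log_mul (norm_ne_zero_iff.2 (hf0 w hw)) (one_sub_norm_sq_pos (hUD hw)).ne']
    ring
  rw [← laplacian_eq_fderiv_fderiv_complexPlane, (laplacian_congr_nhds hsplit).eq_of_nhds,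
    (contDiffAt_neg_log_one_sub_norm_sq hz1).laplacian_sub hlog.1, hlog.2.eq_of_nhds,
    laplacian_neg_log_one_sub_norm_sq hz1, Pi.zero_apply, sub_zero]
  exact ⟨rfl, div_pos four_pos (pow_pos (one_sub_norm_sq_pos hz1) 2)⟩
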